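/- In the algebra A(R) generated by a,b,c,d with the Jordanian relations ca = ac - gc², cd = dc - hc², db = bd + g(ad - bc + hac - d²), ab = ba + h(ad - bc + hac - a²), cb = bc - hac - gdc + ghc², da = ad + hac - gdc, the element D = ad - bc + hac satisfies Dc = cD. -/

import Mathlib

/-- Generators of the Jordanian quantum group algebra `A(R)`. -/
inductive JGen : Type | a | b | c | d

noncomputable def Fa : FreeAlgebra ℂ JGen := FreeAlgebra.ι ℂ JGen.a
noncomputable def Fb : FreeAlgebra ℂ JGen := FreeAlgebra.ι ℂ JGen.b
noncomputable def Fc : FreeAlgebra ℂ JGen := FreeAlgebra.ι ℂ JGen.c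
noncomputable def Fd : FreeAlgebra ℂ JGen := FreeAlgebra.ι ℂ JGen.d

/-- The six defining relations of the Jordanian quantum group `GL_{h,g}(2)`. -/
inductive JRel (h g : ℂ) : FreeAlgebra ℂ JGen → FreeAlgebra ℂ JGen → Prop
  | ca : JRel h g (Fc * Fa) (Fa * Fc - g • (Fc * Fc))
  | cd : JRel h g (Fc * Fd) (Fd * Fc - h • (Fc * Fc))
  | db : JRel h g (Fd * Fb) (Fb * Fd + g • (Fa * Fd - Fb * Fc + h • (Fa * Fc) - Fd * Fd))
  | ab : JRel h g (Fa * Fb) (Fb * Fa + h • (Fa * Fd - Fb * Fc + h • (Fa * Fc) - Fa * Fa))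
  | cb : JRel h g (Fc * Fb) (Fb * Fc - h • (Fa * Fc) - g • (Fd * Fc) + (g * h) • (Fc * Fc))
  | da : JRel h g (Fd * Fa) (Fa * Fd + h • (Fa * Fc) - g • (Fd * Fc))

/-- The Jordanian quantum group algebra `A(R)`. -/
abbrev JA (h g : ℂ) := RingQuot (JRel h g)

noncomputable def qa (h g : ℂ) : JA h g := RingQuot.mkAlgHom ℂ (JRel h g) Fa
noncomputable def qb (h g : ℂ) : JA h g := RingQuot.mkAlgHom ℂ (JRel h g) Fb
noncomputable def qc (h g : ℂ) : JA h g := RingQuot.mkAlgHom ℂ (JRel h g) Fc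
noncomputable def qd (h g : ℂ) : JA h g := RingQuot.mkAlgHom ℂ (JRel h g) Fd

/-- The quantum determinant `D = ad - bc + hac`. -/
noncomputable def qdet (h g : ℂ) : JA h g :=
  qa h g * qd h g - qb h g * qc h g + h • (qa h g * qc h g)

section
variable (h g : ℂ)

lemma jrel (x y : FreeAlgebra ℂ JGen) (hr : JRel h g x y) :
    RingQuot.mkAlgHom ℂ (JRel h g) x = RingQuot.mkAlgHom ℂ (JRel h g) y :=
  RingQuot.mkAlgHom_rel ℂ hr

lemma rel_ca : qc h g * qa h g = qa h g * qc h g - g • (qc h g * qc h g) := by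
  have := jrel h g _ _ (JRel.ca (h := h) (g := g))
  simpa [qa, qb, qc, qd, map_mul, map_sub, map_smul] using this

lemma rel_cd : qc h g * qd h g = qd h g * qc h g - h • (qc h g * qc h g) := by
  have := jrel h g _ _ (JRel.cd (h := h) (g := g))
  simpa [qa, qb, qc, qd, map_mul, map_sub, map_smul] using this

lemma rel_cb : qc h g * qb h g = qb h g * qc h g - h • (qa h g * qc h g)
    - g • (qd h g * qc h g) + (g * h) • (qc h g * qc h g) := by
  have := jrel h g _ _ (JRel.cb (h := h) (g := g))
  simpa [qa, qb, qc, qd, map_mul, map_sub, map_add, map_smul] using this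

end

theorem qdet_comm_c (h g : ℂ) : qdet h g * qc h g = qc h g * qdet h g := by
  set a := qa h g; set b := qb h g; set c := qc h g; set d := qd h g
  have hca := rel_ca h g
  have hcd := rel_cd h g
  have hcb := rel_cb h g
  have h1 : c * (a * d) = a * (d * c) - h • (a * (c*c)) - g • (d * (c*c)) + (2*g*h) • (c*(c*c)) := by
    calc c * (a * d) = (c * a) * d := by rw [mul_assoc]
    _ = (a * c - g • (c * c)) * d := by rw [hca]
    _ = a * (c * d) - g • (c * (c * d)) := by
        simp [sub_mul, smul_mul_assoc, mul_assoc]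
    _ = _ := by
        rw [hcd]
        simp only [mul_sub, mul_smul_comm, smul_sub, smul_smul]
        have : c * (d * c) = (d * c - h • (c*c)) * c := by rw [← hcd, mul_assoc]
        rw [this]
        simp only [sub_mul, smul_mul_assoc, mul_assoc]
        module
  have h2 : c * (b * c) = b * (c*c) - h • (a * (c*c)) - g • (d * (c*c)) + (g*h) • (c * (c*c)) := by
    calc c * (b * c) = (c * b) * c := by rw [mul_assoc]
    _ = _ := by rw [hcb]; simp only [sub_mul, add_mul, smul_mul_assoc, mul_assoc]; rfl
  have h3 : c * (a * c) = a * (c*c) - g • (c * (c*c)) := by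
    calc c * (a * c) = (c * a) * c := by rw [mul_assoc]
    _ = _ := by rw [hca]; simp only [sub_mul, smul_mul_assoc, mul_assoc]; rfl
  have hDc : qdet h g * c = a * (d * c) - b * (c * c) + h • (a * (c * c)) := by
    simp only [qdet, sub_mul, add_mul, smul_mul_assoc, mul_assoc]; rfl
  have hcD : c * qdet h g = c * (a * d) - c * (b * c) + h • (c * (a * c)) := by
    simp only [qdet, mul_sub, mul_add, mul_smul_comm]; rfl
  rw [hDc, hcD, h1, h2, h3]
  module
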